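/- Let Γ = (G, σ) be a signed graph on n vertices, let 1 ≤ k ≤ n−1 be an integer, and let U ⊆ V(G). Define U_k = { A : A is a k-element subset of V(G) with |A ∩ U| even }. Then the k-token signed graph of the switched graph equals the switching of the k-token signed graph at U_k, that is, F_k(Γ^U) = F_k(Γ)^{U_k} (the same underlying token graph with the same signature). In particular, if two signed graphs on the same underlying graph are switching equivalent, then their k-token signed graphs are switching equivalent. -/

import Mathlib

open scoped Classical

/-- A signed graph: a simple graph together with a signature assigning a sign `±1`
(an element of `ℤˣ`) to each pair of vertices (only the values on edges are relevant). -/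
structure SignedGraph (V : Type*) where
  G : SimpleGraph V
  sign : V → V → ℤˣ
  sign_symm : ∀ u v, sign u v = sign v u

namespace SignedGraph

variable {V W : Type*}

/-- The sign function, as a function on unordered pairs. -/
def esign (Γ : SignedGraph V) : Sym2 V → ℤˣ :=
  Sym2.lift ⟨Γ.sign, Γ.sign_symm⟩

/-- The sign of a walk: the product of the signs of its edges. -/
def walkSign (Γ : SignedGraph V) {u v : V} (p : Γ.G.Walk u v) : ℤˣ :=
  (p.edges.map Γ.esign).prod

/-- A signed graph is balanced if every cycle is positive. -/
def Balanced (Γ : SignedGraph V) : Prop :=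
  ∀ ⦃u : V⦄ (p : Γ.G.Walk u u), p.IsCycle → Γ.walkSign p = 1

/-- Switching at a vertex subset `U`: reverse the sign of every edge with exactly one
endpoint in `U`. -/
noncomputable def switch (Γ : SignedGraph V) (U : Set V) : SignedGraph V where
  G := Γ.G
  sign u v := (if u ∈ U then (-1 : ℤˣ) else 1) * (if v ∈ U then (-1 : ℤˣ) else 1) * Γ.sign u v
  sign_symm u v := by
    try dsimp only
    rw [Γ.sign_symm u v, mul_comm (if u ∈ U then (-1 : ℤˣ) else 1) (if v ∈ U then (-1 : ℤˣ) else 1)]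

/-- Two signed graphs on the same vertex set are "the same signed graph" when they have the
same underlying graph and the same signature on every edge. -/
def SEq (Γ Γ' : SignedGraph V) : Prop :=
  Γ.G = Γ'.G ∧ ∀ u v, Γ.G.Adj u v → Γ.sign u v = Γ'.sign u v

/-- Switching equivalence of two signed graphs on the same vertex set. -/
def SwitchEquiv (Γ Γ' : SignedGraph V) : Prop :=
  ∃ U : Set V, (Γ.switch U).SEq Γ'

/-- A sign-preserving isomorphism of signed graphs. -/
structure Iso (Γ : SignedGraph V) (Γ' : SignedGraph W) where
  toEquiv : V ≃ W
  adj_iff : ∀ u v, Γ.G.Adj u v ↔ Γ'.G.Adj (toEquiv u) (toEquiv v)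
  sign_eq : ∀ u v, Γ.G.Adj u v → Γ.sign u v = Γ'.sign (toEquiv u) (toEquiv v)

/-- Switching isomorphism: `Γ'` is isomorphic to a switching of `Γ`. -/
def SwitchIso (Γ : SignedGraph V) (Γ' : SignedGraph W) : Prop :=
  ∃ U : Set V, Nonempty ((Γ.switch U).Iso Γ')

/-- The negation of a signed graph: all edge signs reversed. -/
def neg (Γ : SignedGraph V) : SignedGraph V where
  G := Γ.G
  sign u v := -Γ.sign u v
  sign_symm u v := by try dsimp only
                      rw [Γ.sign_symm]

variable [DecidableEq V]

/-- The underlying graph of the `k`-token graph: vertices are the `k`-subsets of `V`,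
with `A ~ B` when `A Δ B = {a, b}`, `a ∈ A`, `b ∈ B` and `a ~ b` in `G`. -/
def tokenAdj (G : SimpleGraph V) (k : ℕ) : SimpleGraph {A : Finset V // A.card = k} where
  Adj A B := ∃ a b, a ∈ A.1 ∧ b ∈ B.1 ∧ G.Adj a b ∧ symmDiff A.1 B.1 = {a, b}
  symm := by
    constructor
    rintro A B ⟨a, b, ha, hb, hab, hs⟩
    exact ⟨b, a, hb, ha, hab.symm, by rw [symmDiff_comm, hs, Finset.pair_comm]⟩
  loopless := by
    constructor
    rintro A ⟨a, b, ha, hb, hab, hs⟩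
    rw [symmDiff_self] at hs
    have h : a ∈ ({a, b} : Finset V) := Finset.mem_insert_self a {b}
    rw [← hs] at h
    simp at h

/-- The `k`-token signed graph: the edge obtained by moving a token along `ab`
carries the sign of `ab`. -/
def token (Γ : SignedGraph V) (k : ℕ) : SignedGraph {A : Finset V // A.card = k} where
  G := tokenAdj Γ.G k
  sign A B := ∏ a ∈ A.1 \ B.1, ∏ b ∈ B.1 \ A.1, Γ.sign a b
  sign_symm A B := by
    try dsimp only
    rw [Finset.prod_comm]
    exact Finset.prod_congr rfl fun b _ => Finset.prod_congr rfl fun a _ => Γ.sign_symm a b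

/-- The signed adjacency matrix (over `ℝ`). -/
noncomputable def adjMatrix (Γ : SignedGraph V) [Fintype V] : Matrix V V ℝ :=
  Matrix.of fun u v => if Γ.G.Adj u v then ((Γ.sign u v : ℤ) : ℝ) else 0

/-- The signed Laplacian matrix `L = D - A` (over `ℝ`). -/
noncomputable def lapMatrix (Γ : SignedGraph V) [Fintype V] : Matrix V V ℝ :=
  Matrix.diagonal (fun v => (Γ.G.degree v : ℝ)) - Γ.adjMatrix

/-- The quantity `ℓ_m(Γ)`. -/
noncomputable def ellm (Γ : SignedGraph V) [Fintype V] (m : ℕ) : ℝ :=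
  (∑ r ∈ Finset.range (m + 1),
      ((Γ.G.adjMatrix ℝ ^ r).trace - (Γ.adjMatrix ^ r).trace)) /
  (∑ r ∈ Finset.range (m + 1),
      ((Γ.G.adjMatrix ℝ ^ r).trace + |(Γ.adjMatrix ^ r).trace|))

/-- The unbalance level `ℓ(Γ) = max {ℓ_{n-1}(Γ), ℓ_n(Γ)}`. -/
noncomputable def unbalanceLevel (Γ : SignedGraph V) [Fintype V] : ℝ :=
  max (Γ.ellm (Fintype.card V - 1)) (Γ.ellm (Fintype.card V))

/-- The frustration index: the minimum number of negative edges whose deletion yields a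
balanced signed graph. -/
noncomputable def frustrationIndex (Γ : SignedGraph V) : ℕ :=
  sInf {m : ℕ | ∃ F : Finset (Sym2 V), F.card = m ∧ ↑F ⊆ Γ.G.edgeSet ∧
    (∀ e ∈ F, Γ.esign e = -1) ∧
    Balanced ⟨Γ.G.deleteEdges ↑F, Γ.sign, Γ.sign_symm⟩}

/-- The signed complement of a balanced signed graph, with respect to a switching function
`s` witnessing balance (`A_σ = S A S`): the signed graph on the complement graph with
adjacency matrix `S Ā S`, i.e. with sign `s u * s v` on each complement edge. -/
def scompl (Γ : SignedGraph V) (s : V → ℤˣ) : SignedGraph V where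
  G := Γ.Gᶜ
  sign u v := s u * s v
  sign_symm u v := mul_comm _ _

/-- The real diagonal `±1` matrix associated with `s : V → ℤˣ`. -/
noncomputable def diagS [Fintype V] (s : V → ℤˣ) : Matrix V V ℝ :=
  Matrix.diagonal fun v => ((s v : ℤ) : ℝ)

end SignedGraph

/-- The all-positive signed complete graph on `V`. -/
def allPos (V : Type*) : SignedGraph V := ⟨⊤, fun _ _ => 1, fun _ _ => rfl⟩

/-- The `(n; 1, k)`-binomial matrix. -/
noncomputable def binomB (V : Type*) [Fintype V] [DecidableEq V] (k : ℕ) :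
    Matrix {A : Finset V // A.card = k} V ℝ :=
  Matrix.of fun A v => if v ∈ A.1 then 1 else 0

/-- The `(n; k₁, k₂)`-binomial matrix. -/
noncomputable def binomB2 (V : Type*) [Fintype V] [DecidableEq V] (k₁ k₂ : ℕ) :
    Matrix {A : Finset V // A.card = k₂} {A : Finset V // A.card = k₁} ℝ :=
  Matrix.of fun A X => if X.1 ⊆ A.1 then 1 else 0

/-! With `ε_U v = -1` for `v ∈ U` and `1` otherwise, the sign by which `U_k` switches a `k`-set
`A` is `-(-1)^|A ∩ U| = -∏_{v ∈ A} ε_U v`. Along a token edge `A ~ B` moving a token from `a`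
to `b`, the common part `A ∩ B` contributes a square to the product of the two endpoint signs,
which is therefore `ε_U a * ε_U b`: the sign by which `U` switches the edge `ab` of `Γ`. -/

theorem Finset.sdiff_eq_singleton_of_symmDiff_eq_pair {V : Type*} [DecidableEq V]
    {A B : Finset V} {a b : V} (ha : a ∈ A) (hb : b ∈ B) (hs : symmDiff A B = {a, b}) :
    A \ B = {a} ∧ B \ A = {b} := by
  have hmem : ∀ x, (x ∈ A ∧ x ∉ B ∨ x ∈ B ∧ x ∉ A) ↔ x = a ∨ x = b := fun x => by
    rw [← Finset.mem_symmDiff, hs, Finset.mem_insert, Finset.mem_singleton]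
  constructor <;> ext x <;> simp only [Finset.mem_sdiff, Finset.mem_singleton] <;> grind

theorem Finset.prod_ite_mem_neg_one {V : Type*} (A : Finset V) (U : Set V) :
    ∏ v ∈ A, (if v ∈ U then (-1 : ℤˣ) else 1) = (-1) ^ (A.filter (· ∈ U)).card := by
  simp [Finset.prod_ite]

theorem ite_even_neg_one_eq (m : ℕ) : (if Even m then (-1 : ℤˣ) else 1) = -(-1) ^ m := by
  rcases m.even_or_odd with hm | hm
  · simp [hm, hm.neg_one_pow]
  · simp [Nat.not_even_iff_odd.2 hm, hm.neg_one_pow]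

theorem Finset.ite_even_card_filter_mul_of_sdiff_eq {V : Type*} [DecidableEq V]
    {A B : Finset V} {a b : V} (hA : A \ B = {a}) (hB : B \ A = {b}) (U : Set V) :
    (if Even (A.filter (· ∈ U)).card then (-1 : ℤˣ) else 1) *
        (if Even (B.filter (· ∈ U)).card then (-1 : ℤˣ) else 1) =
      (if a ∈ U then (-1 : ℤˣ) else 1) * (if b ∈ U then (-1 : ℤˣ) else 1) := by
  set ε : V → ℤˣ := fun v => if v ∈ U then -1 else 1
  calc _ = (∏ v ∈ A, ε v) * ∏ v ∈ B, ε v := by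
        rw [ite_even_neg_one_eq, ite_even_neg_one_eq, neg_mul_neg,
          Finset.prod_ite_mem_neg_one, Finset.prod_ite_mem_neg_one]
    _ = (∏ v ∈ A ∩ B, ε v) * (∏ v ∈ A ∩ B, ε v) * (ε a * ε b) := by
        rw [← A.prod_inter_mul_prod_sdiff B, ← B.prod_inter_mul_prod_sdiff A,
          Finset.inter_comm B A, hA, hB, Finset.prod_singleton, Finset.prod_singleton]
        ac_rfl
    _ = ε a * ε b := by rw [Int.units_mul_self, one_mul]

namespace SignedGraph

variable {V : Type*} [DecidableEq V]

theorem exists_adj_sdiff_eq_singleton_of_tokenAdj {G : SimpleGraph V} {k : ℕ}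
    {A B : {A : Finset V // A.card = k}} (h : (tokenAdj G k).Adj A B) :
    ∃ a b, G.Adj a b ∧ A.1 \ B.1 = {a} ∧ B.1 \ A.1 = {b} := by
  obtain ⟨a, b, ha, hb, hab, hs⟩ := h
  exact ⟨a, b, hab, Finset.sdiff_eq_singleton_of_symmDiff_eq_pair ha hb hs⟩

theorem token_sign_of_sdiff_eq_singleton (Γ : SignedGraph V) {k : ℕ}
    {A B : {A : Finset V // A.card = k}} {a b : V} (hA : A.1 \ B.1 = {a})
    (hB : B.1 \ A.1 = {b}) : (Γ.token k).sign A B = Γ.sign a b := by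
  simp only [token, hA, hB, Finset.prod_singleton]

omit [DecidableEq V] in
theorem SEq.symm {Γ Γ' : SignedGraph V} (h : Γ.SEq Γ') : Γ'.SEq Γ :=
  ⟨h.1.symm, fun u v huv => (h.2 u v (h.1 ▸ huv)).symm⟩

omit [DecidableEq V] in
theorem SEq.trans {Γ Γ' Γ'' : SignedGraph V} (h : Γ.SEq Γ') (h' : Γ'.SEq Γ'') : Γ.SEq Γ'' :=
  ⟨h.1.trans h'.1, fun u v huv => (h.2 u v huv).trans (h'.2 u v (h.1 ▸ huv))⟩

theorem SEq.token {Γ Γ' : SignedGraph V} (h : Γ.SEq Γ') (k : ℕ) :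
    (Γ.token k).SEq (Γ'.token k) := by
  refine ⟨congrArg (tokenAdj · k) h.1, fun A B hAB => ?_⟩
  obtain ⟨a, b, hab, hA, hB⟩ := exists_adj_sdiff_eq_singleton_of_tokenAdj hAB
  rw [token_sign_of_sdiff_eq_singleton Γ hA hB, token_sign_of_sdiff_eq_singleton Γ' hA hB]
  exact h.2 a b hab

theorem switch_token_sEq (Γ : SignedGraph V) (U : Set V) (k : ℕ) :
    ((Γ.switch U).token k).SEq
      ((Γ.token k).switch {T | Even ((T.1.filter (· ∈ U)).card)}) := by
  refine ⟨rfl, fun A B hAB => ?_⟩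
  obtain ⟨a, b, -, hA, hB⟩ := exists_adj_sdiff_eq_singleton_of_tokenAdj hAB
  rw [token_sign_of_sdiff_eq_singleton _ hA hB]
  show _ = _ * _ * (Γ.token k).sign A B
  rw [token_sign_of_sdiff_eq_singleton Γ hA hB]
  -- `convert` reconciles the classical and the `Nat` decidability instances of `Even`.
  convert congrArg (· * Γ.sign a b) (Finset.ite_even_card_filter_mul_of_sdiff_eq hA hB U).symm
    <;> rfl

theorem SwitchEquiv.token {Γ Γ' : SignedGraph V} (h : Γ.SwitchEquiv Γ') (k : ℕ) :
    (Γ.token k).SwitchEquiv (Γ'.token k) := by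
  obtain ⟨U, hU⟩ := h
  exact ⟨_, (switch_token_sEq Γ U k).symm.trans (hU.token k)⟩

end SignedGraph

theorem token_of_switch_general {V : Type*} [DecidableEq V] (k : ℕ)
    (Γ : SignedGraph V) (U : Set V) :
    SignedGraph.SEq ((Γ.switch U).token k)
      ((Γ.token k).switch
        {T : {A : Finset V // A.card = k} | Even ((T.1.filter (· ∈ U)).card)}) ∧
    ∀ Γ' : SignedGraph V, Γ.SwitchEquiv Γ' →
      (Γ.token k).SwitchEquiv (Γ'.token k) :=
  ⟨Γ.switch_token_sEq U k, fun _ h => h.token k⟩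

/-- `F_k(Γ^U) = F_k(Γ)^{U_k}` where `U_k = {A : |A ∩ U| even}`; in particular,
switching equivalent signed graphs have switching equivalent `k`-token signed graphs. -/
theorem token_of_switch {V : Type*} [Fintype V] [DecidableEq V] (n k : ℕ)
    (hn : Fintype.card V = n) (hk1 : 1 ≤ k) (hk2 : k ≤ n - 1)
    (Γ : SignedGraph V) (U : Set V) :
    SignedGraph.SEq ((Γ.switch U).token k)
      ((Γ.token k).switch
        {T : {A : Finset V // A.card = k} | Even ((T.1.filter (· ∈ U)).card)}) ∧
    ∀ Γ' : SignedGraph V, Γ.SwitchEquiv Γ' →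
      (Γ.token k).SwitchEquiv (Γ'.token k) :=
  token_of_switch_general k Γ U
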